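/- arXiv:2110.10212 — 3 statements merged into one kernel-verified Lean document; each statement's English description precedes it below -/
import Mathlib

section
/- Let X and Y be locally compact Hausdorff spaces and f : X → Y a continuous map. Then f factors as the composition of a closed embedding followed by an open embedding followed by a proper map: namely, the graph map Γ_f : X → X × Y, x ↦ (x, f(x)) is a closed embedding; the map j × id_Y : X × Y → X⁺ × Y induced by the inclusion of X into its one-point compactification X⁺ is an open embedding; and the projection p : X⁺ × Y → Y is proper; and p ∘ (j × id_Y) ∘ Γ_f = f. -/
open Topology

open OnePoint

/-- Any continuous map `f : X → Y` between locally compact Hausdorff spaces factors as a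
closed embedding (the graph `Γ_f : X → X × Y`), followed by an open embedding
(`j × id_Y : X × Y → X⁺ × Y` into the one-point compactification), followed by a proper map
(the projection `p : X⁺ × Y → Y`). -/
theorem stmt1 {X Y : Type} [TopologicalSpace X] [TopologicalSpace Y]
    [LocallyCompactSpace X] [LocallyCompactSpace Y] [T2Space X] [T2Space Y]
    (f : X → Y) (hf : Continuous f) :
    IsClosedEmbedding (fun x : X => (x, f x)) ∧
    IsOpenEmbedding (fun p : X × Y => ((p.1 : OnePoint X), p.2)) ∧
    (∀ K : Set Y, IsCompact K → IsCompact (Prod.snd ⁻¹' K : Set (OnePoint X × Y))) ∧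
    (∀ x : X, Prod.snd ((((x : OnePoint X), f x) : OnePoint X × Y)) = f x) := by
  refine ⟨⟨isEmbedding_graph hf, ?_⟩, ?_, ?_, fun x => rfl⟩
  · have : Set.range (fun x : X => (x, f x)) = {p : X × Y | f p.1 = p.2} := by
      ext p
      constructor
      · rintro ⟨x, rfl⟩; rfl
      · intro h; exact ⟨p.1, by obtain ⟨a, b⟩ := p; simp_all⟩
    rw [this]
    exact isClosed_eq (hf.comp continuous_fst) continuous_snd
  · exact (OnePoint.isOpenEmbedding_coe.prodMap IsOpenEmbedding.id)
  · intro K hK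
    have : (Prod.snd ⁻¹' K : Set (OnePoint X × Y)) = Set.univ ×ˢ K := by
      ext p; simp
    rw [this]
    exact isCompact_univ.prod hK
end

section
/- Let L : C → D and R : D → C be an adjoint pair of functors (L ⊣ R) where R is fully faithful, exhibiting D as a reflective subcategory of C via the class S of morphisms inverted by L. Then for any category E, precomposition with L induces a fully faithful functor from left-adjoint functors D → E to left-adjoint functors C → E, whose essential image consists exactly of those left adjoints C → E sending every morphism of S to an isomorphism. -/
/-!
Since `R` is fully faithful, `L` is a localization at the class `S` of morphisms it inverts.
Hence precomposition with `L` is fully faithful with essential image the functors inverting `S`,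
and it remains to see that if a left adjoint `G ⊣ G'` inverts `S`, its descent along `L` is
again a left adjoint, with right adjoint `G' ⋙ L`.
-/

open CategoryTheory

universe v₁ v₂ v₃ u₁ u₂ u₃

variable {C : Type u₁} [Category.{v₁} C] {D : Type u₂} [Category.{v₂} D]
  {E : Type u₃} [Category.{v₃} E]

/-- The functor induced by precomposition with `L` between the full subcategories of
left-adjoint functors `D ⥤ E` and `C ⥤ E`. -/
noncomputable def precompLeftAdjoints (L : C ⥤ D) (R : D ⥤ C) (adj : L ⊣ R) :
    ObjectProperty.FullSubcategory (fun F : D ⥤ E => F.IsLeftAdjoint) ⥤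
      ObjectProperty.FullSubcategory (fun F : C ⥤ E => F.IsLeftAdjoint) :=
  ObjectProperty.lift _
    (ObjectProperty.ι _ ⋙ (Functor.whiskeringLeft C D E).obj L)
    (fun F => by
      haveI : L.IsLeftAdjoint := ⟨R, ⟨adj⟩⟩
      haveI : F.obj.IsLeftAdjoint := F.property
      exact Functor.isLeftAdjoint_comp L F.obj)

/-- The adjunction `G ⊣ G'` descends along the localizations `L` of `C` at `W` and `𝟭 E` of `E`
at its isomorphisms. -/
lemma CategoryTheory.Localization.isLeftAdjoint_lift (L : C ⥤ D) (W : MorphismProperty C)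
    [L.IsLocalization W] (G : C ⥤ E) (hG : W.IsInvertedBy G) [G.IsLeftAdjoint] :
    (Localization.lift G hG L).IsLeftAdjoint := by
  let G' := G.rightAdjoint
  have : CatCommSq G L (𝟭 E) (Localization.lift G hG L) :=
    ⟨G.rightUnitor ≪≫ (Localization.fac G hG L).symm⟩
  have : CatCommSq G' (𝟭 E) L (G' ⋙ L) := ⟨(G' ⋙ L).leftUnitor.symm⟩
  exact ⟨G' ⋙ L, ⟨(Adjunction.ofIsLeftAdjoint G).localization L W (𝟭 E)
    (MorphismProperty.isomorphisms E) _ _⟩⟩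

section

variable (L : C ⥤ D) (R : D ⥤ C) (adj : L ⊣ R)

lemma isIso_map_of_precompLeftAdjoints_obj_iso
    {F : ObjectProperty.FullSubcategory (fun F : D ⥤ E => F.IsLeftAdjoint)}
    {G : ObjectProperty.FullSubcategory (fun F : C ⥤ E => F.IsLeftAdjoint)}
    (e : (precompLeftAdjoints L R adj).obj F ≅ G) {a b : C} (f : a ⟶ b) [IsIso (L.map f)] :
    IsIso (G.obj.map f) :=
  (NatIso.isIso_map_iff ((ObjectProperty.ι _).mapIso e) f).1
    (inferInstanceAs (IsIso (F.obj.map (L.map f))))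

variable [R.Full] [R.Faithful]

lemma full_precompLeftAdjoints : (precompLeftAdjoints (E := E) L R adj).Full :=
  haveI := adj.isLocalization
  haveI := Localization.full_whiskeringLeft L ((MorphismProperty.isomorphisms D).inverseImage L) E
  inferInstanceAs (ObjectProperty.lift _ _ _).Full

lemma faithful_precompLeftAdjoints : (precompLeftAdjoints (E := E) L R adj).Faithful :=
  haveI := adj.isLocalization
  haveI :=
    Localization.faithful_whiskeringLeft L ((MorphismProperty.isomorphisms D).inverseImage L) E
  inferInstanceAs (ObjectProperty.lift _ _ _).Faithful

lemma exists_precompLeftAdjoints_obj_iso_of_isIso_map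
    (G : ObjectProperty.FullSubcategory (fun F : C ⥤ E => F.IsLeftAdjoint))
    (hG : ∀ ⦃a b : C⦄ (f : a ⟶ b), IsIso (L.map f) → IsIso (G.obj.map f)) :
    ∃ F, Nonempty ((precompLeftAdjoints L R adj).obj F ≅ G) := by
  have := adj.isLocalization
  have : G.obj.IsLeftAdjoint := G.property
  have hG : ((MorphismProperty.isomorphisms D).inverseImage L).IsInvertedBy G.obj := hG
  exact ⟨⟨_, Localization.isLeftAdjoint_lift L _ G.obj hG⟩,
    ⟨(ObjectProperty.ι _).preimageIso (Localization.fac G.obj hG L)⟩⟩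

end

/-- Let `L ⊣ R` be a reflective localization (`R` fully faithful) and `S` the class of
morphisms inverted by `L`. Precomposition with `L` induces a fully faithful functor from
left-adjoint functors `D ⥤ E` to left-adjoint functors `C ⥤ E`, whose essential image
consists exactly of the left adjoints `C ⥤ E` sending every morphism of `S` to an
isomorphism. -/
theorem stmt10 (L : C ⥤ D) (R : D ⥤ C) (adj : L ⊣ R) [R.Full] [R.Faithful] :
    (precompLeftAdjoints (E := E) L R adj).Full ∧
    (precompLeftAdjoints (E := E) L R adj).Faithful ∧
    (∀ G : ObjectProperty.FullSubcategory (fun F : C ⥤ E => F.IsLeftAdjoint),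
      (∃ F, Nonempty ((precompLeftAdjoints (E := E) L R adj).obj F ≅ G)) ↔
        ∀ ⦃a b : C⦄ (f : a ⟶ b), IsIso (L.map f) → IsIso (G.obj.map f)) :=
  ⟨full_precompLeftAdjoints L R adj, faithful_precompLeftAdjoints L R adj, fun G =>
    ⟨fun ⟨_, ⟨e⟩⟩ _ _ f _ => isIso_map_of_precompLeftAdjoints_obj_iso L R adj e f,
      exists_precompLeftAdjoints_obj_iso_of_isIso_map L R adj G⟩⟩
end

section
/- Let X be a locally compact Hausdorff space and F a sheaf of abelian groups (or objects of a complete abelian category) on X. Define Θ(F) : K ↦ colim_{K ⊆ U open} F(U) on the poset of compact subsets of X. Then Θ(F) satisfies: (i) Θ(F)(∅) = 0 (terminal); (iii) for every compact K, the canonical map colim_{K ⋐ K'} Θ(F)(K') → Θ(F)(K) is an isomorphism, where K ⋐ K' means K' contains an open neighborhood of K. -/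
open CategoryTheory CategoryTheory.Limits TopologicalSpace

variable (X : Type) [TopologicalSpace X]

/-- The poset of open neighbourhoods of a set `K`. -/
abbrev NbhdIdx (K : Set X) : Type := {U : Set X // IsOpen U ∧ K ⊆ U}

/-- The inclusion of the poset of open neighbourhoods of `K` into the opens of `X`. -/
def nbhdToOpens (K : Set X) : NbhdIdx X K ⥤ Opens (TopCat.of X) :=
  Monotone.functor (f := fun U => ⟨U.1, U.2.1⟩) (fun _ _ h => h)

/-- The diagram `U ↦ F(U)` over open neighbourhoods of `K`, whose colimit is `Θ(F)(K)`. -/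
def thetaDiag (F : TopCat.Presheaf AddCommGrpCat (TopCat.of X)) (K : Set X) :
    (NbhdIdx X K)ᵒᵖ ⥤ AddCommGrpCat :=
  (nbhdToOpens X K).op ⋙ F

/-- `Θ(F)(K) = colim_{K ⊆ U open} F(U)`. -/
noncomputable def theta (F : TopCat.Presheaf AddCommGrpCat (TopCat.of X)) (K : Set X) :
    AddCommGrpCat :=
  colimit (thetaDiag X F K)

/-- The poset of pairs `(K', U)` with `K'` compact, `K ⊆ interior K'`, and `U` an open
containing `K'`; the colimit of `F(U)` over (the opposite of) this poset computes
`colim_{K ⋐ K'} Θ(F)(K')`. -/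
abbrev PairIdx (K : Set X) : Type :=
  {p : Set X × Set X // (IsCompact p.1 ∧ K ⊆ interior p.1) ∧ (IsOpen p.2 ∧ p.1 ⊆ p.2)}

/-- Projection `(K', U) ↦ U` from pairs to open neighbourhoods of `K`. -/
noncomputable def pairProj (K : Set X) : PairIdx X K ⥤ NbhdIdx X K :=
  Monotone.functor
    (f := fun p => ⟨p.1.2, p.2.2.1,
      fun x hx => p.2.2.2 (interior_subset (p.2.1.2 hx))⟩)
    (fun _ _ h => h.2)

/-!
(i) `∅` is the least open neighbourhood of `∅`, so `Θ(F)(∅) = F(∅)`, which is terminal, hence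
zero, for a sheaf.

(iii) In a locally compact space every open `U ⊇ K` contains a compact `K'` with
`K ⊆ interior K'`. Hence the pairs `(K', U)` form a codirected poset on which the projection
`(K', U) ↦ U` is initial, and precomposition with an initial functor does not change the colimit.
-/

def emptyNbhd : NbhdIdx X ∅ := ⟨∅, isOpen_empty, subset_rfl⟩

def emptyNbhdIsInitial : IsInitial (emptyNbhd X) :=
  IsInitial.ofUniqueHom (fun U => homOfLE (Set.empty_subset U.1)) fun _ _ => Subsingleton.elim _ _

noncomputable def thetaEmptyIso (F : TopCat.Presheaf AddCommGrpCat (TopCat.of X)) :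
    F.obj (Opposite.op ⊥) ≅ theta X F ∅ :=
  @asIso _ _ _ _ (colimit.ι (thetaDiag X F ∅) (Opposite.op (emptyNbhd X)))
    (isIso_ι_of_isTerminal (emptyNbhdIsInitial X).op _)

theorem isZero_theta_empty {F : TopCat.Presheaf AddCommGrpCat (TopCat.of X)} (hF : F.IsSheaf) :
    IsZero (theta X F ∅) :=
  (TopCat.Sheaf.isTerminalOfEmpty ⟨F, hF⟩).isZero.of_iso (thetaEmptyIso X F).symm

section LocallyCompact

variable {X} [LocallyCompactSpace X] {K : Set X}

theorem isCodirectedOrder_pairIdx (hK : IsCompact K) : IsCodirectedOrder (PairIdx X K) := by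
  refine ⟨fun p q => ?_⟩
  obtain ⟨L, hL, hKL, hLpq⟩ := exists_compact_between hK (isOpen_interior.inter isOpen_interior)
    (Set.subset_inter p.2.1.2 q.2.1.2)
  have hLp : L ⊆ p.1.1 := fun x hx => interior_subset (hLpq hx).1
  have hLq : L ⊆ q.1.1 := fun x hx => interior_subset (hLpq hx).2
  exact ⟨⟨(L, p.1.2 ∩ q.1.2), ⟨hL, hKL⟩, p.2.2.1.inter q.2.2.1,
      Set.subset_inter (hLp.trans p.2.2.2) (hLq.trans q.2.2.2)⟩,
    ⟨hLp, Set.inter_subset_left⟩, ⟨hLq, Set.inter_subset_right⟩⟩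

theorem pairProj_initial (hK : IsCompact K) : (pairProj X K).Initial := by
  have := isCodirectedOrder_pairIdx hK
  refine Functor.initial_of_exists_of_isCofiltered _ (fun U => ?_)
    fun _ _ => ⟨_, 𝟙 _, Subsingleton.elim _ _⟩
  obtain ⟨L, hL, hKL, hLU⟩ := exists_compact_between hK U.2.1 U.2.2
  exact ⟨⟨(L, U.1), ⟨hL, hKL⟩, U.2.1, hLU⟩, ⟨𝟙 U⟩⟩

end LocallyCompact

theorem stmt14 [LocallyCompactSpace X]
    (F : TopCat.Presheaf AddCommGrpCat (TopCat.of X)) (hF : F.IsSheaf)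
    (K : Set X) (hK : IsCompact K) :
    IsZero (theta X F ∅) ∧
    IsIso (colimit.pre (thetaDiag X F K) (pairProj X K).op) := by
  have := pairProj_initial hK
  exact ⟨isZero_theta_empty X hF, inferInstance⟩
end
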